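/- For every real β > 1 and every positive integer a, the Möbius function satisfies the integral representation μ(a) = a^β ∫_{𝕋^ω} (∑_{n=1}^∞ n^{-β} t^{α(n)})^{-1} · t^{-α(a)} dt. -/

import Mathlib

open MeasureTheory Filter Finset

noncomputable section

instance : MeasurableSpace Circle := borel Circle
instance : BorelSpace Circle := ⟨rfl⟩

/-- The infinite-dimensional torus `𝕋^ω`, a countable product of unit circles. -/
abbrev Torus : Type := ℕ → Circle

/-- `pprime j` is the `j`-th prime (`0`-indexed, so `pprime 0 = 2`). -/
def pprime (j : ℕ) : ℕ := Nat.nth Nat.Prime j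

/-- `expOf n j` is `α_j(n)`, the exponent of the `j`-th prime in the factorization of `n`. -/
def expOf (n j : ℕ) : ℕ := n.factorization (pprime j)

/-- `tpow t n = t^{α(n)} = ∏_j t_j^{α_j(n)}`, a finite product. -/
def tpow (t : Torus) (n : ℕ) : ℂ := ∏ᶠ j, ((t j : ℂ) ^ expOf n j)

/-!
Since `n ↦ t^{α(n)}` is completely multiplicative and bounded by `1`, Möbius inversion for
Dirichlet series gives `(∑ n^{-β} t^{α(n)})⁻¹ = ∑ μ(n) n^{-β} t^{α(n)}`, absolutely and uniformly
in `t`. Integrating term by term against `t^{-α(a)}`, the orthogonality of the characters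
`t ↦ t^{α(n)}` of `𝕋^ω` (unique factorization makes them distinct) leaves only `μ(a) a^{-β}`.
-/

open scoped ArithmeticFunction.Moebius LSeries.notation

namespace LSeries

lemma mul_convolution_distrib_of_map_mul {R : Type*} [CommSemiring R] {χ : ℕ → R}
    (hχ : ∀ {m n : ℕ}, m ≠ 0 → n ≠ 0 → χ (m * n) = χ m * χ n) (f g : ℕ → R) :
    (χ * f) ⍟ (χ * g) = χ * (f ⍟ g) := by
  ext N
  simp only [Pi.mul_apply, convolution_def, Finset.mul_sum]
  refine Finset.sum_congr rfl fun p hp ↦ ?_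
  obtain ⟨hpN, hN⟩ := Nat.mem_divisorsAntidiagonal.mp hp
  rw [← hpN, hχ (left_ne_zero_of_mul (hpN ▸ hN)) (right_ne_zero_of_mul (hpN ▸ hN))]
  exact mul_mul_mul_comm ..

variable {χ : ℕ → ℂ}

lemma convolution_mul_moebius_of_map_mul (h1 : χ 1 = 1)
    (hχ : ∀ {m n : ℕ}, m ≠ 0 → n ≠ 0 → χ (m * n) = χ m * χ n) : χ ⍟ (χ * ↗μ) = δ := by
  have : (1 : ℕ → ℂ) ⍟ ↗μ = δ := by
    rw [one_convolution_eq_zeta_convolution, ← ArithmeticFunction.one_eq_delta]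
    simp_rw [← ArithmeticFunction.natCoe_apply, ← ArithmeticFunction.intCoe_apply,
      ArithmeticFunction.coe_mul, ArithmeticFunction.coe_zeta_mul_coe_moebius]
  nth_rewrite 1 [← mul_one χ]
  rw [mul_convolution_distrib_of_map_mul hχ, this, mul_delta h1]

lemma mul_mu_eq_one_of_map_mul (h1 : χ 1 = 1)
    (hχ : ∀ {m n : ℕ}, m ≠ 0 → n ≠ 0 → χ (m * n) = χ m * χ n) (hχ_le : ∀ n, ‖χ n‖ ≤ 1)
    {s : ℂ} (hs : 1 < s.re) : L χ s * L (χ * ↗μ) s = 1 := by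
  have hχs : LSeriesSummable χ s := LSeriesSummable_of_bounded_of_one_lt_re (fun n _ ↦ hχ_le n) hs
  have hχμs : LSeriesSummable (χ * ↗μ) s :=
    LSeriesSummable_of_bounded_of_one_lt_re (m := 1) (fun n _ ↦ by
      have hμ : ‖(μ n : ℂ)‖ ≤ 1 := by
        rw [Complex.norm_intCast]; exact_mod_cast ArithmeticFunction.abs_moebius_le_one
      simpa [norm_mul] using mul_le_one₀ (hχ_le n) (norm_nonneg _) hμ) hs
  rw [← LSeries_convolution' hχs hχμs, convolution_mul_moebius_of_map_mul h1 hχ, LSeries_delta,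
    Pi.one_apply]

end LSeries

open LSeries

lemma integral_eq_zero_of_mul_left_eq_mul {G : Type*} [Group G] [MeasurableSpace G]
    [MeasurableMul G] {ν : Measure G} [ν.IsMulLeftInvariant] {f : G → ℂ} {g : G} {c : ℂ}
    (hc : c ≠ 1) (hf : ∀ x, f (g * x) = c * f x) : ∫ x, f x ∂ν = 0 := by
  have h : c * ∫ x, f x ∂ν = ∫ x, f x ∂ν := by
    simp_rw [← integral_const_mul, ← hf, integral_mul_left_eq_self]
  have : (c - 1) * ∫ x, f x ∂ν = 0 := by rw [sub_mul, h, one_mul, sub_self]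
  exact (mul_eq_zero.mp this).resolve_left (sub_ne_zero.mpr hc)

lemma Circle.exists_pow_ne_pow {m n : ℕ} (h : m ≠ n) :
    ∃ z : Circle, (z : ℂ) ^ m ≠ (z : ℂ) ^ n := by
  have hk : m + n + 1 ≠ 0 := by omega
  refine ⟨Circle.exp (2 * Real.pi / (m + n + 1 : ℕ)), fun hmn ↦ h ?_⟩
  have hz : (Circle.exp (2 * Real.pi / (m + n + 1 : ℕ)) : ℂ) =
      Complex.exp (2 * Real.pi * Complex.I / (m + n + 1 : ℕ)) := by
    rw [Circle.coe_exp]; push_cast; ring_nf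
  rw [hz] at hmn
  exact (Complex.isPrimitiveRoot_exp _ hk).pow_inj (by omega) (by omega) hmn

lemma expOf_eq_zero_of_lt {n j : ℕ} (h : n < j) : expOf n j = 0 :=
  Nat.factorization_eq_zero_of_lt <|
    h.trans_le (Nat.nth_strictMono Nat.infinite_setOfPred_prime).le_apply

lemma exists_expOf_ne {m n : ℕ} (hm : m ≠ 0) (hn : n ≠ 0) (h : m ≠ n) :
    ∃ j, expOf m j ≠ expOf n j := by
  by_contra! hexp
  refine h (Nat.factorization_inj hm hn ?_)
  ext p
  by_cases hp : p.Prime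
  · simpa [expOf, pprime, Nat.nth_count hp] using hexp (Nat.count Nat.Prime p)
  · simp [Nat.factorization_eq_zero_of_not_prime _ hp]

lemma tpow_eq_prod_range (t : Torus) {n N : ℕ} (h : n < N) :
    tpow t n = ∏ j ∈ Finset.range N, (t j : ℂ) ^ expOf n j := by
  refine finprod_eq_prod_of_mulSupport_subset _ fun j hj ↦ Finset.mem_range.mpr ?_
  by_contra! hjN
  exact hj (by simp [expOf_eq_zero_of_lt (h.trans_le hjN)])

lemma norm_tpow (t : Torus) (n : ℕ) : ‖tpow t n‖ = 1 := by
  simp [tpow_eq_prod_range t n.lt_succ_self, norm_prod, Circle.norm_coe]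

lemma tpow_ne_zero (t : Torus) (n : ℕ) : tpow t n ≠ 0 :=
  norm_ne_zero_iff.mp (by simp [norm_tpow])

lemma tpow_one (t : Torus) : tpow t 1 = 1 := by
  simp [tpow_eq_prod_range t one_lt_two, expOf]

lemma tpow_mul (t : Torus) {m n : ℕ} (hm : m ≠ 0) (hn : n ≠ 0) :
    tpow t (m * n) = tpow t m * tpow t n := by
  have hmn : m * n < m * n + 1 := Nat.lt_succ_self _
  rw [tpow_eq_prod_range t hmn,
    tpow_eq_prod_range t ((Nat.le_mul_of_pos_right m (Nat.pos_of_ne_zero hn)).trans_lt hmn),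
    tpow_eq_prod_range t ((Nat.le_mul_of_pos_left n (Nat.pos_of_ne_zero hm)).trans_lt hmn),
    ← prod_mul_distrib]
  refine prod_congr rfl fun j _ ↦ ?_
  rw [expOf, Nat.factorization_mul hm hn, Finsupp.add_apply, pow_add]
  rfl

lemma tpow_torus_mul (s t : Torus) (n : ℕ) : tpow (s * t) n = tpow s n * tpow t n := by
  simp only [tpow_eq_prod_range _ n.lt_succ_self, ← prod_mul_distrib, Pi.mul_apply,
    Circle.coe_mul, mul_pow]

lemma tpow_update_one (j n : ℕ) (z : Circle) :
    tpow (Function.update 1 j z) n = (z : ℂ) ^ expOf n j := by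
  refine (finprod_eq_single _ j fun i hi ↦ ?_).trans (by simp)
  simp [Function.update_of_ne hi]

lemma continuous_tpow (n : ℕ) : Continuous fun t : Torus ↦ tpow t n := by
  simp only [tpow_eq_prod_range _ n.lt_succ_self]
  fun_prop

lemma integral_tpow_mul_inv_tpow (ν : Measure Torus) [ν.IsHaarMeasure] [IsProbabilityMeasure ν]
    {m n : ℕ} (hm : m ≠ 0) (hn : n ≠ 0) :
    ∫ t, tpow t m * (tpow t n)⁻¹ ∂ν = if m = n then 1 else 0 := by
  split_ifs with h
  · simp [h, mul_inv_cancel₀ (tpow_ne_zero _ n)]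
  obtain ⟨j, hj⟩ := exists_expOf_ne hm hn h
  obtain ⟨z, hz⟩ := Circle.exists_pow_ne_pow hj
  -- Translating the `j`-th coordinate by `z` scales the integrand by `z^{α_j(m)} / z^{α_j(n)} ≠ 1`.
  set g : Torus := Function.update 1 j z
  refine integral_eq_zero_of_mul_left_eq_mul (g := g) (c := tpow g m * (tpow g n)⁻¹) ?_ ?_
  · rw [Ne, mul_inv_eq_one₀ (tpow_ne_zero g n), tpow_update_one, tpow_update_one]
    exact hz
  · intro t
    rw [tpow_torus_mul, tpow_torus_mul, mul_inv]
    ring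

lemma tsum_tpow_succ_div_eq_LSeries (t : Torus) (β : ℝ) :
    ∑' n : ℕ, tpow t (n + 1) / Complex.ofReal (((n : ℝ) + 1) ^ β) =
      L (fun n ↦ tpow t n) β := by
  have hsupp : Function.support (term (fun n ↦ tpow t n) β) ⊆ Set.range Nat.succ := fun n hn ↦
    (Nat.exists_eq_succ_of_ne_zero (by rintro rfl; exact hn (term_zero ..))).imp fun _ h ↦ h.symm
  rw [LSeries, ← Nat.succ_injective.tsum_eq hsupp]
  refine tsum_congr fun n ↦ ?_
  rw [term_of_ne_zero n.succ_ne_zero, Complex.ofReal_cpow (by positivity)]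
  push_cast
  rfl

lemma inv_LSeries_tpow (t : Torus) {s : ℂ} (hs : 1 < s.re) :
    (L (fun n ↦ tpow t n) s)⁻¹ = L ((fun n ↦ tpow t n) * ↗μ) s :=
  (eq_inv_of_mul_eq_one_right <| LSeries.mul_mu_eq_one_of_map_mul (tpow_one t) (tpow_mul t)
    (fun n ↦ (norm_tpow t n).le) hs).symm

section TermwiseIntegral

variable (s : ℂ)

lemma continuous_term_mul_inv_tpow (a n : ℕ) :
    Continuous fun t ↦ term ((fun m ↦ tpow t m) * ↗μ) s n * (tpow t a)⁻¹ := by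
  have hinv := (continuous_tpow a).inv₀ (tpow_ne_zero · a)
  simp only [term_def, Pi.mul_apply]
  split_ifs
  · exact continuous_const.mul hinv
  · exact (((continuous_tpow n).mul continuous_const).div_const _).mul hinv

lemma norm_term_mul_inv_tpow (t : Torus) (a n : ℕ) :
    ‖term ((fun m ↦ tpow t m) * ↗μ) s n * (tpow t a)⁻¹‖ = ‖term ↗μ s n‖ := by
  simp [norm_term_eq, norm_tpow]

lemma integral_term_mul_inv_tpow (ν : Measure Torus) [ν.IsHaarMeasure] [IsProbabilityMeasure ν]
    {a : ℕ} (ha : a ≠ 0) (n : ℕ) :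
    ∫ t, term ((fun m ↦ tpow t m) * ↗μ) s n * (tpow t a)⁻¹ ∂ν =
      if n = a then term ↗μ s a else 0 := by
  rcases eq_or_ne n 0 with rfl | hn
  · simp [ha.symm]
  have : ∀ t, term ((fun m ↦ tpow t m) * ↗μ) s n * (tpow t a)⁻¹ =
      term ↗μ s n * (tpow t n * (tpow t a)⁻¹) := fun t ↦ by
    simp only [term_of_ne_zero hn, Pi.mul_apply]
    ring
  simp_rw [this, integral_const_mul, integral_tpow_mul_inv_tpow ν hn ha]
  split_ifs with h <;> simp [h]

end TermwiseIntegral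

/-- For every real `β > 1` and every positive integer `a`, the Möbius function satisfies
`μ(a) = a^β ∫_{𝕋^ω} (∑_{n=1}^∞ n^{-β} t^{α(n)})⁻¹ · t^{-α(a)} dt`, where `dt` is the
normalized Haar measure on `𝕋^ω` and `t^{-α(a)} = (t^{α(a)})⁻¹`. -/
theorem moebius_integral_repr (β : ℝ) (hβ : 1 < β) (a : ℕ) (ha : 1 ≤ a)
    (ν : Measure Torus) [ν.IsHaarMeasure] [IsProbabilityMeasure ν] :
    ((ArithmeticFunction.moebius a : ℤ) : ℂ) =
      Complex.ofReal ((a : ℝ) ^ β) *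
        ∫ t : Torus,
          (∑' n : ℕ, tpow t (n + 1) / (Complex.ofReal (((n : ℝ) + 1) ^ β)))⁻¹
            * (tpow t a)⁻¹ ∂ν := by
  have ha0 : a ≠ 0 := by omega
  have hs : 1 < (β : ℂ).re := by simpa using hβ
  set F : ℕ → Torus → ℂ := fun n t ↦ term ((fun m ↦ tpow t m) * ↗μ) β n * (tpow t a)⁻¹
  have hF : ∀ t, (∑' n : ℕ, tpow t (n + 1) / Complex.ofReal (((n : ℝ) + 1) ^ β))⁻¹ *
      (tpow t a)⁻¹ = ∑' n, F n t := fun t ↦ by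
    rw [tsum_tpow_succ_div_eq_LSeries, inv_LSeries_tpow t hs, LSeries, tsum_mul_right]
  have hF_sum : Summable fun n ↦ ∫ t, ‖F n t‖ ∂ν := by
    simpa only [F, norm_term_mul_inv_tpow, integral_const, probReal_univ, one_smul] using
      (ArithmeticFunction.LSeriesSummable_moebius_iff.mpr hs).norm
  rw [integral_congr_ae (.of_forall hF), ← integral_tsum_of_summable_integral_norm
    (fun n ↦ (continuous_term_mul_inv_tpow _ a n).integrable_of_hasCompactSupport
      (.of_compactSpace _)) hF_sum,
    tsum_congr (integral_term_mul_inv_tpow β ν ha0), tsum_ite_eq, term_of_ne_zero ha0,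
    Complex.ofReal_cpow (Nat.cast_nonneg a), Complex.ofReal_natCast,
    mul_div_cancel₀ _ (by simp [ha0])]
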